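/- For 0 < σ < 1 and z with Re(z²) > 0, the function t ↦ (1/Γ(σ))(e^{-z²/(4t)} - 1) t^{σ-1} satisfies, for every n ∈ ℕ with n ≥ 1: ∫₀^∞ |(d^n/dt^n)[(e^{-z²/(4t)} - 1) t^{σ-1}]| t^n dt ≤ C_{n,σ} |z|^{2n}/(Re(z²))^{n-σ}, with C_{n,σ} independent of z. -/

import Mathlib

/-!
For `t > 0` the `n`-th derivative of `(exp (-w / t) - 1) * t ^ ν` is
`(Pₙ (w / t) * exp (-w / t) - Pₙ 0) * t ^ (ν - n)`, where `P₀ = 1` and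
`Pₙ₊₁ = (ν - n + X) Pₙ - X Pₙ'` has degree at most `n`. Write `Pₙ = Pₙ 0 + X Qₙ`. The monomials
`(w / t) ^ (j + 1) * exp (-w / t)` of the `X Qₙ` part contribute, against `t ^ (σ - 1)`,
`Γ(j + 1 - σ) |w| ^ (j + 1) (Re w) ^ (σ - j - 1)`, by the substitution `t ↦ 1 / t` in the Gamma
integral. The part `Pₙ 0 * (exp (-w / t) - 1)` is at most `2 |Pₙ 0| min 1 (|w| / t)`, whose
integral against `t ^ (σ - 1)` is `O(|w| ^ σ)` because `0 < σ < 1`. As `Re w ≤ |w|` and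
`j + 1 ≤ n`, `σ ≤ n`, every contribution is at most a constant times `|w| ^ n (Re w) ^ (σ - n)`;
then put `w = z ^ 2 / 4`.
-/

open Real MeasureTheory Set

theorem iteratedDeriv_eqOn_of_hasDerivAt {𝕜 F : Type*} [NontriviallyNormedField 𝕜]
    [NormedAddCommGroup F] [NormedSpace 𝕜 F] {s : Set 𝕜} (hs : IsOpen s) {f : 𝕜 → F}
    {g : ℕ → 𝕜 → F} (h0 : EqOn f (g 0) s)
    (hg : ∀ n, ∀ x ∈ s, HasDerivAt (g n) (g (n + 1) x) x) :
    ∀ n, EqOn (iteratedDeriv n f) (g n) s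
  | 0 => by simpa using h0
  | n + 1 => fun x hx => by
    rw [iteratedDeriv_succ,
      Filter.EventuallyEq.deriv_eq (Filter.eventuallyEq_of_mem (hs.mem_nhds hx)
        (iteratedDeriv_eqOn_of_hasDerivAt hs h0 hg n))]
    exact (hg n x hx).deriv

namespace Polynomial

lemma norm_eval_le_sum_range {𝕜 : Type*} [NormedRing 𝕜] [NormOneClass 𝕜] {p : 𝕜[X]} {m : ℕ}
    (hp : p.natDegree < m) (x : 𝕜) :
    ‖p.eval x‖ ≤ ∑ j ∈ Finset.range m, ‖p.coeff j‖ * ‖x‖ ^ j := by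
  rw [eval_eq_sum_range' hp]
  exact (norm_sum_le _ _).trans (Finset.sum_le_sum fun j _ =>
    (norm_mul_le _ _).trans (by gcongr; exact norm_pow_le _ _))

lemma norm_eval_mul_sub_eval_zero_le {𝕜 : Type*} [NormedCommRing 𝕜] (p : 𝕜[X]) (x e : 𝕜) :
    ‖p.eval x * e - p.eval 0‖ ≤ ‖x‖ * ‖p.divX.eval x‖ * ‖e‖ + ‖p.eval 0‖ * ‖e - 1‖ := by
  have hsplit : p.eval x * e - p.eval 0 = x * p.divX.eval x * e + p.eval 0 * (e - 1) := by
    conv_lhs => rw [← divX_mul_X_add p]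
    simp only [eval_add, eval_mul, eval_X, eval_C, ← coeff_zero_eq_eval_zero]
    ring
  rw [hsplit]
  refine (norm_add_le _ _).trans (add_le_add ?_ (norm_mul_le _ _))
  exact (norm_mul_le _ _).trans (by gcongr; exact norm_mul_le _ _)

end Polynomial

lemma Complex.norm_exp_neg_sub_one_le {x : ℂ} (hx : 0 ≤ x.re) :
    ‖Complex.exp (-x) - 1‖ ≤ 2 * min 1 ‖x‖ := by
  rcases le_total ‖x‖ 1 with h | h
  · rw [min_eq_right h, ← norm_neg x]
    exact Complex.norm_exp_sub_one_le (by rwa [norm_neg])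
  · rw [min_eq_left h]
    have : ‖Complex.exp (-x)‖ ≤ 1 := by
      rw [Complex.norm_exp, Complex.neg_re, Real.exp_le_one_iff]
      linarith
    linarith [norm_sub_le (Complex.exp (-x)) 1, norm_one (α := ℂ)]

lemma rpow_mul_rpow_sub_le_rpow_mul_rpow_sub {a W k n : ℝ} (σ : ℝ) (ha : 0 < a) (haW : a ≤ W)
    (hkn : k ≤ n) : W ^ k * a ^ (σ - k) ≤ W ^ n * a ^ (σ - n) := by
  have hW := ha.trans_le haW
  calc W ^ k * a ^ (σ - k) = W ^ k * a ^ (n - k) * a ^ (σ - n) := by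
        rw [mul_assoc, ← Real.rpow_add ha]; ring_nf
    _ ≤ W ^ k * W ^ (n - k) * a ^ (σ - n) := by
        gcongr
    _ = W ^ n * a ^ (σ - n) := by
        rw [← Real.rpow_add hW]; ring_nf

section ExpInvIntegral

variable {a b : ℝ}

/-- The integrand of `∫ y ^ (b - 1) * exp (-a * y)` after the substitution `y = t⁻¹`. -/
private lemma comp_rpow_neg_one_eq (a b : ℝ) {x : ℝ} (hx : 0 < x) :
    (|(-1 : ℝ)| * x ^ ((-1 : ℝ) - 1)) • ((x ^ (-1 : ℝ)) ^ (b - 1) * Real.exp (-(a * x ^ (-1 : ℝ))))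
      = Real.exp (-(a / x)) * x ^ (-b - 1) := by
  rw [← Real.rpow_mul hx.le, smul_eq_mul, abs_neg, abs_one, one_mul, Real.rpow_neg_one,
    ← div_eq_mul_inv, ← mul_assoc, ← Real.rpow_add hx]
  ring_nf

lemma integrableOn_exp_neg_div_mul_rpow (ha : 0 < a) (hb : 0 < b) :
    IntegrableOn (fun t : ℝ => Real.exp (-(a / t)) * t ^ (-b - 1)) (Ioi 0) := by
  have hg : IntegrableOn (fun y : ℝ => y ^ (b - 1) * Real.exp (-(a * y))) (Ioi 0) := by
    simpa using integrableOn_rpow_mul_exp_neg_mul_rpow (p := 1) (by linarith) zero_lt_one ha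
  exact ((integrableOn_Ioi_comp_rpow_iff _ (p := -1) (by norm_num)).mpr hg).congr_fun
    (fun x hx => comp_rpow_neg_one_eq a b hx) measurableSet_Ioi

lemma integral_exp_neg_div_mul_rpow (ha : 0 < a) (hb : 0 < b) :
    ∫ t in Ioi (0 : ℝ), Real.exp (-(a / t)) * t ^ (-b - 1) = Real.Gamma b * a ^ (-b) := by
  have key := integral_comp_rpow_Ioi
    (fun y : ℝ => y ^ (b - 1) * Real.exp (-(a * y))) (p := -1) (by norm_num)
  rw [Real.integral_rpow_mul_exp_neg_mul_Ioi hb ha] at key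
  rw [← setIntegral_congr_fun measurableSet_Ioi (fun x hx => comp_rpow_neg_one_eq a b hx), key,
    one_div, Real.inv_rpow ha.le, ← Real.rpow_neg ha.le, mul_comm]

end ExpInvIntegral

section MinIntegral

variable {W σ : ℝ}

lemma integrableOn_Ioc_rpow_sub_one (hW : 0 < W) (hσ : 0 < σ) :
    IntegrableOn (fun t : ℝ => t ^ (σ - 1)) (Ioc 0 W) := by
  rw [← intervalIntegrable_iff_integrableOn_Ioc_of_le hW.le]
  exact intervalIntegral.intervalIntegrable_rpow' (by linarith)

lemma integral_Ioc_rpow_sub_one (hW : 0 < W) (hσ : 0 < σ) :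
    ∫ t in Ioc 0 W, t ^ (σ - 1) = W ^ σ / σ := by
  rw [← intervalIntegral.integral_of_le hW.le, integral_rpow (Or.inl (by linarith)),
    sub_add_cancel, Real.zero_rpow hσ.ne', sub_zero]

lemma integral_Ioi_const_mul_rpow_sub_two (hW : 0 < W) (hσ : σ < 1) :
    ∫ t in Ioi W, W * t ^ (σ - 2) = W ^ σ / (1 - σ) := by
  have hσ' : σ - 1 ≠ 0 := by linarith
  have hσ'' : 1 - σ ≠ 0 := by linarith
  rw [integral_const_mul, integral_Ioi_rpow_of_lt (by linarith) hW,
    show σ - 2 + 1 = σ - 1 by ring, show W ^ σ = W * W ^ (σ - 1) by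
      rw [mul_comm, ← Real.rpow_add_one hW.ne', sub_add_cancel]]
  field_simp
  ring

lemma min_one_div_mul_rpow_nonneg (hW : 0 ≤ W) {t : ℝ} (ht : 0 < t) :
    0 ≤ min 1 (W / t) * t ^ (σ - 1) := by
  have := Real.rpow_nonneg ht.le (σ - 1)
  positivity

lemma min_one_div_mul_rpow_le_rpow {t : ℝ} (ht : 0 < t) :
    min 1 (W / t) * t ^ (σ - 1) ≤ t ^ (σ - 1) :=
  mul_le_of_le_one_left (Real.rpow_nonneg ht.le _) (min_le_left _ _)

lemma min_one_div_mul_rpow_le_mul_rpow {t : ℝ} (ht : 0 < t) :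
    min 1 (W / t) * t ^ (σ - 1) ≤ W * t ^ (σ - 2) := by
  calc min 1 (W / t) * t ^ (σ - 1) ≤ W / t * t ^ (σ - 1) := by
        gcongr; exact min_le_right _ _
    _ = W * t ^ (σ - 2) := by
        rw [show σ - 2 = σ - 1 - 1 by ring, Real.rpow_sub_one ht.ne' (σ - 1)]; ring

lemma integrableOn_Ioc_min_one_div_mul_rpow (hW : 0 < W) (hσ : 0 < σ) :
    IntegrableOn (fun t : ℝ => min 1 (W / t) * t ^ (σ - 1)) (Ioc 0 W) :=
  (integrableOn_Ioc_rpow_sub_one hW hσ).mono' (by fun_prop : Measurable _).aestronglyMeasurable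
    ((ae_restrict_iff' measurableSet_Ioc).mpr (ae_of_all _ fun _ ht => by
      rw [norm_of_nonneg (min_one_div_mul_rpow_nonneg hW.le ht.1)]
      exact min_one_div_mul_rpow_le_rpow ht.1))

lemma integrableOn_Ioi_min_one_div_mul_rpow (hW : 0 < W) (hσ : σ < 1) :
    IntegrableOn (fun t : ℝ => min 1 (W / t) * t ^ (σ - 1)) (Ioi W) :=
  ((integrableOn_Ioi_rpow_of_lt (show σ - 2 < -1 by linarith) hW).const_mul W).mono'
    (by fun_prop : Measurable _).aestronglyMeasurable
    ((ae_restrict_iff' measurableSet_Ioi).mpr (ae_of_all _ fun _ ht => by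
      rw [norm_of_nonneg (min_one_div_mul_rpow_nonneg hW.le (hW.trans ht))]
      exact min_one_div_mul_rpow_le_mul_rpow (hW.trans ht)))

lemma integrableOn_min_one_div_mul_rpow (hW : 0 < W) (hσ0 : 0 < σ) (hσ1 : σ < 1) :
    IntegrableOn (fun t : ℝ => min 1 (W / t) * t ^ (σ - 1)) (Ioi 0) := by
  rw [← Ioc_union_Ioi_eq_Ioi hW.le]
  exact (integrableOn_Ioc_min_one_div_mul_rpow hW hσ0).union
    (integrableOn_Ioi_min_one_div_mul_rpow hW hσ1)

lemma integral_min_one_div_mul_rpow_le (hW : 0 < W) (hσ0 : 0 < σ) (hσ1 : σ < 1) :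
    ∫ t in Ioi 0, min 1 (W / t) * t ^ (σ - 1) ≤ (1 / σ + 1 / (1 - σ)) * W ^ σ := by
  rw [← Ioc_union_Ioi_eq_Ioi hW.le, setIntegral_union (Ioc_disjoint_Ioi le_rfl) measurableSet_Ioi
    (integrableOn_Ioc_min_one_div_mul_rpow hW hσ0) (integrableOn_Ioi_min_one_div_mul_rpow hW hσ1)]
  have hIoc := setIntegral_mono_on (integrableOn_Ioc_min_one_div_mul_rpow hW hσ0)
    (integrableOn_Ioc_rpow_sub_one hW hσ0) measurableSet_Ioc
    (fun t ht => min_one_div_mul_rpow_le_rpow (W := W) (σ := σ) ht.1)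
  have hIoi := setIntegral_mono_on (integrableOn_Ioi_min_one_div_mul_rpow hW hσ1)
    ((integrableOn_Ioi_rpow_of_lt (by linarith) hW).const_mul W) measurableSet_Ioi
    (fun t ht => min_one_div_mul_rpow_le_mul_rpow (W := W) (σ := σ) (hW.trans ht))
  rw [integral_Ioc_rpow_sub_one hW hσ0] at hIoc
  rw [integral_Ioi_const_mul_rpow_sub_two hW hσ1] at hIoi
  calc _ ≤ W ^ σ / σ + W ^ σ / (1 - σ) := add_le_add hIoc hIoi
    _ = _ := by ring

end MinIntegral

section ExpInvPoly

open Polynomial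

noncomputable def expInvPoly (ν : ℝ) : ℕ → ℂ[X]
  | 0 => 1
  | n + 1 => (C ((ν - n : ℝ) : ℂ) + X) * expInvPoly ν n - X * derivative (expInvPoly ν n)

lemma expInvPoly.natDegree_le (ν : ℝ) : ∀ n, (expInvPoly ν n).natDegree ≤ n
  | 0 => by simp [expInvPoly]
  | n + 1 => by
    have ih := natDegree_le ν n
    rw [expInvPoly]
    refine (natDegree_sub_le _ _).trans (max_le ?_ ?_)
    · refine natDegree_mul_le.trans ?_
      have : (C ((ν - n : ℝ) : ℂ) + X).natDegree ≤ 1 := by compute_degree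
      omega
    · refine natDegree_mul_le.trans ?_
      have := natDegree_derivative_le (expInvPoly ν n)
      have : (X : ℂ[X]).natDegree ≤ 1 := natDegree_X_le
      omega

lemma expInvPoly.eval_zero_succ (ν : ℝ) (n : ℕ) :
    (expInvPoly ν (n + 1)).eval 0 = (ν - n : ℝ) * (expInvPoly ν n).eval 0 := by
  simp [expInvPoly]

lemma hasDerivAt_eval_div_mul_rpow_mul_cexp (p : ℂ[X]) (μ : ℝ) (w : ℂ) {t : ℝ} (ht : 0 < t) :
    HasDerivAt (fun s : ℝ => p.eval (w / s) * ((s ^ μ : ℝ) : ℂ) * Complex.exp (-w / s))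
      (((C (μ : ℂ) + X) * p - X * derivative p).eval (w / t) * ((t ^ (μ - 1) : ℝ) : ℂ)
        * Complex.exp (-w / t)) t := by
  have htc : (t : ℂ) ≠ 0 := by exact_mod_cast ht.ne'
  have hdiv : ∀ c : ℂ, HasDerivAt (fun s : ℝ => c / s) (-c / t ^ 2) t := fun c => by
    simpa using ((hasDerivAt_const (t : ℂ) c).div (hasDerivAt_id (t : ℂ)) htc).comp_ofReal
  have hp := (p.hasDerivAt (w / t)).comp t (hdiv w)
  have hpow := (Real.hasDerivAt_rpow_const (p := μ) (Or.inl ht.ne')).ofReal_comp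
  have hexp := (hdiv (-w)).cexp
  refine ((hp.fun_mul hpow).fun_mul hexp).congr_deriv ?_
  rw [show ((t ^ μ : ℝ) : ℂ) = ((t ^ (μ - 1) : ℝ) : ℂ) * t by
    rw [← Complex.ofReal_mul, ← Real.rpow_add_one ht.ne']; norm_num]
  simp only [eval_sub, eval_mul, eval_add, eval_C, eval_X, Function.comp_apply, neg_neg]
  push_cast
  field_simp
  ring

lemma hasDerivAt_eval_expInvPoly_mul_cexp_sub_mul_rpow (ν : ℝ) (w : ℂ) (n : ℕ) {t : ℝ}
    (ht : 0 < t) :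
    HasDerivAt (fun s : ℝ => ((expInvPoly ν n).eval (w / s) * Complex.exp (-w / s)
        - (expInvPoly ν n).eval 0) * ((s ^ (ν - n) : ℝ) : ℂ))
      (((expInvPoly ν (n + 1)).eval (w / t) * Complex.exp (-w / t)
        - (expInvPoly ν (n + 1)).eval 0) * ((t ^ (ν - (n + 1 : ℕ)) : ℝ) : ℂ)) t := by
  have h1 := hasDerivAt_eval_div_mul_rpow_mul_cexp (expInvPoly ν n) (ν - n) w ht
  have h2 := ((Real.hasDerivAt_rpow_const (p := ν - n) (Or.inl ht.ne')).ofReal_comp).const_mul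
    ((expInvPoly ν n).eval 0)
  refine ((h1.fun_sub h2).congr_deriv ?_).congr_of_eventuallyEq
    (Filter.Eventually.of_forall fun s => by ring)
  rw [expInvPoly.eval_zero_succ, expInvPoly, show ν - (n + 1 : ℕ) = ν - n - 1 by push_cast; ring]
  push_cast
  ring

/-- The complex power `(s : ℂ) ^ (ν : ℂ)` agrees with the real one `s ^ ν` only for `s ≥ 0`, so the
formula holds on `Ioi 0` only. -/
lemma iteratedDeriv_cexp_sub_one_mul_cpow (ν : ℝ) (w : ℂ) (n : ℕ) :
    EqOn (iteratedDeriv n (fun s : ℝ => (Complex.exp (-w / s) - 1) * (s : ℂ) ^ (ν : ℂ)))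
      (fun t => ((expInvPoly ν n).eval (w / t) * Complex.exp (-w / t)
        - (expInvPoly ν n).eval 0) * ((t ^ (ν - n) : ℝ) : ℂ)) (Ioi 0) := by
  refine iteratedDeriv_eqOn_of_hasDerivAt isOpen_Ioi (fun t ht => ?_)
    (fun n t ht => hasDerivAt_eval_expInvPoly_mul_cexp_sub_mul_rpow ν w n ht) n
  simp [expInvPoly, Complex.ofReal_cpow (le_of_lt ht)]

end ExpInvPoly

section Majorant

open Polynomial

variable (p : ℂ[X]) (m : ℕ) (σ : ℝ) (w : ℂ)

noncomputable def expInvMajorant (t : ℝ) : ℝ :=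
  ∑ j ∈ Finset.range m, ‖p.divX.coeff j‖ * ‖w‖ ^ (j + 1) *
      (Real.exp (-(w.re / t)) * t ^ (-((j : ℝ) + 1 - σ) - 1))
    + 2 * ‖p.eval 0‖ * (min 1 (‖w‖ / t) * t ^ (σ - 1))

variable {p m σ w}

lemma norm_eval_mul_cexp_sub_eval_zero_mul_rpow_le_expInvMajorant
    (hp : p.divX.natDegree < m) (hw : 0 ≤ w.re) {t : ℝ} (ht : 0 < t) :
    ‖p.eval (w / t) * Complex.exp (-w / t) - p.eval 0‖ * t ^ (σ - 1) ≤
      expInvMajorant p m σ w t := by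
  have hx : ‖w / t‖ = ‖w‖ / t := by
    rw [norm_div, Complex.norm_real, Real.norm_of_nonneg ht.le]
  have hre : (w / t).re = w.re / t := Complex.div_ofReal_re w t
  have hE : ‖Complex.exp (-w / t)‖ = Real.exp (-(w.re / t)) := by
    rw [Complex.norm_exp, neg_div, Complex.neg_re, hre]
  have hpow : ∀ j : ℕ, (‖w‖ / t) ^ (j + 1) * t ^ (σ - 1) =
      ‖w‖ ^ (j + 1) * t ^ (-((j : ℝ) + 1 - σ) - 1) := fun j => by
    rw [div_pow, div_mul_eq_mul_div, mul_div_assoc, ← Real.rpow_natCast t, ← Real.rpow_sub ht]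
    push_cast
    ring_nf
  have hq := norm_eval_le_sum_range hp (w / t)
  have hexp := Complex.norm_exp_neg_sub_one_le (x := w / t) (by rw [hre]; positivity)
  calc ‖p.eval (w / t) * Complex.exp (-w / t) - p.eval 0‖ * t ^ (σ - 1)
      ≤ (‖w / t‖ * ‖p.divX.eval (w / t)‖ * ‖Complex.exp (-w / t)‖
          + ‖p.eval 0‖ * ‖Complex.exp (-(w / t)) - 1‖) * t ^ (σ - 1) := by
        rw [← neg_div]; gcongr; exact p.norm_eval_mul_sub_eval_zero_le _ _
    _ ≤ ((‖w‖ / t) * (∑ j ∈ Finset.range m, ‖p.divX.coeff j‖ * (‖w‖ / t) ^ j)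
            * Real.exp (-(w.re / t)) + ‖p.eval 0‖ * (2 * min 1 (‖w‖ / t))) * t ^ (σ - 1) := by
        rw [hx, hE, ← hx]; gcongr
    _ = _ := by
        simp only [expInvMajorant, Finset.mul_sum, Finset.sum_mul, add_mul]
        congr 1
        · refine Finset.sum_congr rfl fun j _ => ?_
          linear_combination ‖p.divX.coeff j‖ * Real.exp (-(w.re / t)) * hpow j
        · ring

lemma integrableOn_expInvMajorant (hw : 0 < w.re) (hσ0 : 0 < σ) (hσ1 : σ < 1) :
    IntegrableOn (expInvMajorant p m σ w) (Ioi 0) := by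
  refine (integrable_finsetSum _ fun j _ => ?_).add
    ((integrableOn_min_one_div_mul_rpow (hw.trans_le (Complex.re_le_norm w)) hσ0 hσ1).const_mul _)
  refine (integrableOn_exp_neg_div_mul_rpow hw ?_).const_mul _
  linarith [j.cast_nonneg (α := ℝ)]

lemma integral_expInvMajorant_le (hw : 0 < w.re) (hσ0 : 0 < σ) (hσ1 : σ < 1) (hm : 1 ≤ m) :
    ∫ t in Ioi 0, expInvMajorant p m σ w t ≤
      (∑ j ∈ Finset.range m, ‖p.divX.coeff j‖ * Real.Gamma ((j : ℝ) + 1 - σ)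
        + 2 * ‖p.eval 0‖ * (1 / σ + 1 / (1 - σ))) * (‖w‖ ^ m * w.re ^ (σ - m)) := by
  have hb : ∀ j : ℕ, 0 < (j : ℝ) + 1 - σ := fun j => by linarith [j.cast_nonneg (α := ℝ)]
  have hW := hw.trans_le (Complex.re_le_norm w)
  have hsum_int : ∀ j ∈ Finset.range m, IntegrableOn (fun t : ℝ => ‖p.divX.coeff j‖ *
      ‖w‖ ^ (j + 1) * (Real.exp (-(w.re / t)) * t ^ (-((j : ℝ) + 1 - σ) - 1))) (Ioi 0) :=
    fun j _ => (integrableOn_exp_neg_div_mul_rpow hw (hb j)).const_mul _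
  have hmin_int := (integrableOn_min_one_div_mul_rpow hW hσ0 hσ1).const_mul (2 * ‖p.eval 0‖)
  have hterm : ∀ j ∈ Finset.range m,
      ‖w‖ ^ (j + 1) * w.re ^ (-((j : ℝ) + 1 - σ)) ≤ ‖w‖ ^ m * w.re ^ (σ - m) := fun j hj => by
    have hjm : ((j + 1 : ℕ) : ℝ) ≤ m := by exact_mod_cast Finset.mem_range.mp hj
    have := rpow_mul_rpow_sub_le_rpow_mul_rpow_sub σ hw (Complex.re_le_norm w) hjm
    rwa [Real.rpow_natCast, Real.rpow_natCast, Nat.cast_succ, ← neg_sub] at this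
  have hmin : ‖w‖ ^ σ ≤ ‖w‖ ^ m * w.re ^ (σ - m) := by
    have hσm : σ ≤ m := by linarith [show (1 : ℝ) ≤ m by exact_mod_cast hm]
    have := rpow_mul_rpow_sub_le_rpow_mul_rpow_sub σ hw (Complex.re_le_norm w) hσm
    rwa [sub_self, Real.rpow_zero, mul_one, Real.rpow_natCast] at this
  calc ∫ t in Ioi 0, expInvMajorant p m σ w t
      = ∑ j ∈ Finset.range m, ‖p.divX.coeff j‖ * Real.Gamma ((j : ℝ) + 1 - σ) *
          (‖w‖ ^ (j + 1) * w.re ^ (-((j : ℝ) + 1 - σ)))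
        + 2 * ‖p.eval 0‖ * ∫ t in Ioi (0 : ℝ), min 1 (‖w‖ / t) * t ^ (σ - 1) := by
        unfold expInvMajorant
        rw [integral_add (integrable_finsetSum _ hsum_int) hmin_int,
          integral_finsetSum _ hsum_int, integral_const_mul]
        congr 1
        refine Finset.sum_congr rfl fun j _ => ?_
        rw [integral_const_mul, integral_exp_neg_div_mul_rpow hw (hb j)]
        ring
    _ ≤ ∑ j ∈ Finset.range m, ‖p.divX.coeff j‖ * Real.Gamma ((j : ℝ) + 1 - σ) *
          (‖w‖ ^ m * w.re ^ (σ - m))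
        + 2 * ‖p.eval 0‖ * ((1 / σ + 1 / (1 - σ)) * (‖w‖ ^ m * w.re ^ (σ - m))) := by
        have : 0 < 1 - σ := by linarith
        refine add_le_add (Finset.sum_le_sum fun j hj => mul_le_mul_of_nonneg_left (hterm j hj)
          (mul_nonneg (norm_nonneg _) (Real.Gamma_nonneg_of_nonneg (hb j).le)))
          (mul_le_mul_of_nonneg_left ?_ (by positivity))
        exact (integral_min_one_div_mul_rpow_le hW hσ0 hσ1).trans (by gcongr)
    _ = _ := by simp only [add_mul, Finset.sum_mul]; ring

end Majorant

theorem integral_norm_iteratedDeriv_cexp_sub_one_mul_cpow_le {σ : ℝ} (hσ0 : 0 < σ)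
    (hσ1 : σ < 1) {n : ℕ} (hn : 1 ≤ n) :
    ∃ K : ℝ, ∀ w : ℂ, 0 < w.re →
      ∫ t in Ioi (0 : ℝ),
          ‖iteratedDeriv n
              (fun s : ℝ => (Complex.exp (-w / s) - 1) * (s : ℂ) ^ ((σ - 1 : ℝ) : ℂ)) t‖ * t ^ n
        ≤ K * (‖w‖ ^ n * w.re ^ (σ - n)) := by
  set p := expInvPoly (σ - 1) n
  have hdeg : p.divX.natDegree < n := by
    have : p.natDegree ≤ n := expInvPoly.natDegree_le (σ - 1) n
    rw [Polynomial.natDegree_divX_eq_natDegree_tsub_one]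
    omega
  refine ⟨_, fun w hw => (integral_mono_of_nonneg ?_ (integrableOn_expInvMajorant hw hσ0 hσ1)
    ((ae_restrict_iff' measurableSet_Ioi).mpr (ae_of_all _ fun t ht => ?_))).trans
    (integral_expInvMajorant_le (p := p) hw hσ0 hσ1 hn)⟩
  · exact (ae_restrict_iff' measurableSet_Ioi).mpr
      (ae_of_all _ fun t (ht : 0 < t) => by positivity)
  · rw [iteratedDeriv_cexp_sub_one_mul_cpow _ w n ht, norm_mul, Complex.norm_real,
      norm_of_nonneg (Real.rpow_nonneg (le_of_lt ht) _), mul_assoc, ← Real.rpow_natCast,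
      ← Real.rpow_add ht, sub_add_cancel]
    exact norm_eval_mul_cexp_sub_eval_zero_mul_rpow_le_expInvMajorant hdeg hw.le ht

lemma norm_pow_mul_re_rpow_of_div_four (z : ℂ) (hz : 0 < (z ^ 2).re) (n : ℕ) (σ : ℝ) :
    ‖z ^ 2 / 4‖ ^ n * (z ^ 2 / 4).re ^ (σ - n) =
      (4 : ℝ) ^ (-σ) * ‖z‖ ^ (2 * n) / (z ^ 2).re ^ ((n : ℝ) - σ) := by
  have hre : (z ^ 2 / 4).re = (z ^ 2).re / 4 := Complex.div_ofNat_re (z ^ 2) 4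
  have h4 : (4 : ℝ) ^ n * (4 : ℝ) ^ (σ - n) * (4 : ℝ) ^ (-σ) = 1 := by
    rw [← Real.rpow_natCast, ← Real.rpow_add four_pos, ← Real.rpow_add four_pos]; simp
  rw [hre, norm_div, norm_pow, Complex.norm_ofNat, div_pow, ← pow_mul,
    Real.div_rpow hz.le zero_le_four, ← neg_sub (n : ℝ), Real.rpow_neg hz.le]
  rw [← neg_sub (n : ℝ)] at h4
  field_simp
  linear_combination -‖z‖ ^ (2 * n) * h4

theorem perturbed_kernel_iterated_deriv_norm_estimate
    (σ : ℝ) (hσ0 : 0 < σ) (hσ1 : σ < 1) (n : ℕ) (hn : 1 ≤ n) :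
    ∃ C : ℝ, ∀ z : ℂ, 0 < (z ^ 2).re →
      ∫ t in Ioi (0:ℝ),
          ‖iteratedDeriv n
              (fun s : ℝ => (Complex.exp (-z ^ 2 / (4 * s)) - 1) * (s : ℂ) ^ ((σ - 1 : ℝ) : ℂ))
              t‖ * t ^ n ≤
        C * ‖z‖ ^ (2 * n) / ((z ^ 2).re) ^ ((n : ℝ) - σ) := by
  obtain ⟨K, hK⟩ := integral_norm_iteratedDeriv_cexp_sub_one_mul_cpow_le hσ0 hσ1 hn
  refine ⟨K * (4 : ℝ) ^ (-σ), fun z hz => ?_⟩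
  have hw : 0 < (z ^ 2 / 4).re := by rw [Complex.div_ofNat_re]; positivity
  have hexp : ∀ s : ℝ, -z ^ 2 / (4 * s) = -(z ^ 2 / 4) / s := fun s => by ring
  simp only [hexp]
  refine (hK _ hw).trans_eq ?_
  rw [norm_pow_mul_re_rpow_of_div_four z hz, mul_assoc, ← mul_div_assoc]
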